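/- Let P be symmetric positive definite, B full row rank, γ = P Bᵀ(BPBᵀ)⁻¹. Then trace((I − γB)P(I − γB)ᵀ) = trace(P) − trace(γBP), and trace(γBP) > 0, so trace((I − γB)P(I − γB)ᵀ) < trace(P). That is, the projected covariance has strictly smaller trace than the unconstrained covariance. -/

import Mathlib

/-!
With `S = B P Bᵀ` and `γ = P Bᵀ S⁻¹` we have `B γ = 1`, so `G = γ B` is idempotent, and symmetry of
`P` and `S` gives `P Gᵀ = G P`. Expanding, `(1 - G) P (1 - G)ᵀ = P - G P - P Gᵀ + G P Gᵀ = P - G P`.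
Moreover `G P = (B P)ᵀ S⁻¹ (B P)` is positive semidefinite, and it is nonzero because
`B (G P) Bᵀ = S`, which is positive definite as `B` has full row rank; hence `tr (G P) > 0`.
-/

open Matrix

namespace Matrix

variable {R : Type*} {m n : Type*} [Fintype m] [Fintype n]

theorem one_sub_mul_mul_transpose_one_sub [DecidableEq n] [CommRing R] {G P : Matrix n n R}
    (hG : IsIdempotentElem G) (hGP : P * Gᵀ = G * P) :
    (1 - G) * P * (1 - G)ᵀ = P - G * P := by
  have hGPG : G * P * Gᵀ = G * P := by rw [Matrix.mul_assoc, hGP, ← Matrix.mul_assoc, hG.eq]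
  calc (1 - G) * P * (1 - G)ᵀ = P - G * P - (P * Gᵀ - G * P * Gᵀ) := by
        rw [transpose_sub, transpose_one]; noncomm_ring
    _ = P - G * P := by rw [hGP, hGPG, sub_self, sub_zero]

theorem linearIndependent_row_of_rank_eq_card [Field R] {A : Matrix m n R}
    (hA : A.rank = Fintype.card m) : LinearIndependent R A.row := by
  rw [linearIndependent_iff_card_eq_finrank_span, Set.finrank, ← rank_eq_finrank_span_row, hA]

theorem PosDef.mul_mul_transpose_of_rank_eq_card {P : Matrix n n ℝ} {B : Matrix m n ℝ}
    (hP : P.PosDef) (hB : B.rank = Fintype.card m) : (B * P * Bᵀ).PosDef := by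
  simpa only [conjTranspose_eq_transpose_of_trivial] using
    hP.mul_mul_conjTranspose_same
      (vecMul_injective_iff.mpr (linearIndependent_row_of_rank_eq_card hB))

section ConstraintGain

variable [DecidableEq m]

noncomputable def constraintGain [CommRing R] (P : Matrix n n R) (B : Matrix m n R) : Matrix n m R :=
  P * Bᵀ * (B * P * Bᵀ)⁻¹

section CommRing

variable [CommRing R] {P : Matrix n n R} {B : Matrix m n R}

theorem mul_constraintGain (hS : IsUnit (B * P * Bᵀ).det) : B * constraintGain P B = 1 := by
  rw [constraintGain, ← Matrix.mul_assoc, ← Matrix.mul_assoc, mul_nonsing_inv _ hS]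

theorem isIdempotentElem_constraintGain_mul (hS : IsUnit (B * P * Bᵀ).det) :
    IsIdempotentElem (constraintGain P B * B) := by
  rw [IsIdempotentElem, Matrix.mul_assoc, ← Matrix.mul_assoc B, mul_constraintGain hS,
    Matrix.one_mul]

theorem mul_transpose_constraintGain_mul (hP : Pᵀ = P) :
    P * (constraintGain P B * B)ᵀ = constraintGain P B * B * P := by
  simp only [constraintGain, transpose_mul, transpose_nonsing_inv, hP, transpose_transpose,
    Matrix.mul_assoc]

end CommRing

theorem trace_constraintGain_mul_mul_pos [Nonempty m] {P : Matrix n n ℝ} {B : Matrix m n ℝ}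
    (hP : Pᵀ = P) (hS : (B * P * Bᵀ).PosDef) : 0 < (constraintGain P B * B * P).trace := by
  have hPSD : (constraintGain P B * B * P).PosSemidef := by
    have := hS.inv.posSemidef.conjTranspose_mul_mul_same (B * P)
    simpa only [constraintGain, conjTranspose_eq_transpose_of_trivial, transpose_mul, hP,
      Matrix.mul_assoc] using this
  have hne : constraintGain P B * B * P ≠ 0 := by
    intro h
    have hBS : B * (constraintGain P B * B * P) * Bᵀ = B * P * Bᵀ := by
      simp only [← Matrix.mul_assoc, mul_constraintGain (hS.isUnit.map detMonoidHom),
        Matrix.one_mul]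
    rw [h, Matrix.mul_zero, Matrix.zero_mul] at hBS
    exact hS.trace_pos.ne (by rw [← hBS, trace_zero])
  exact hPSD.trace_nonneg.lt_of_ne (Ne.symm (mt hPSD.trace_eq_zero_iff.mp hne))

end ConstraintGain

end Matrix

theorem stmt_2_general {n k : ℕ} (hk : 1 ≤ k) (P : Matrix (Fin n) (Fin n) ℝ)
    (B : Matrix (Fin k) (Fin n) ℝ) (hP : P.PosDef) (hB : B.rank = k) :
    ((1 - (P * Bᵀ * (B * P * Bᵀ)⁻¹) * B) * P * (1 - (P * Bᵀ * (B * P * Bᵀ)⁻¹) * B)ᵀ).trace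
      = P.trace - ((P * Bᵀ * (B * P * Bᵀ)⁻¹) * B * P).trace ∧
    0 < ((P * Bᵀ * (B * P * Bᵀ)⁻¹) * B * P).trace ∧
    ((1 - (P * Bᵀ * (B * P * Bᵀ)⁻¹) * B) * P * (1 - (P * Bᵀ * (B * P * Bᵀ)⁻¹) * B)ᵀ).trace
      < P.trace := by
  rw [show P * Bᵀ * (B * P * Bᵀ)⁻¹ = constraintGain P B from rfl]
  have : Nonempty (Fin k) := ⟨⟨0, hk⟩⟩
  have hPt : Pᵀ = P := (isHermitian_iff_isSymm.mp hP.isHermitian).eq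
  have hS := hP.mul_mul_transpose_of_rank_eq_card (B := B) (by rwa [Fintype.card_fin])
  have hJoseph := one_sub_mul_mul_transpose_one_sub
    (isIdempotentElem_constraintGain_mul (hS.isUnit.map detMonoidHom))
    (mul_transpose_constraintGain_mul (B := B) hPt)
  have hpos := trace_constraintGain_mul_mul_pos hPt hS
  rw [hJoseph, trace_sub]
  exact ⟨rfl, hpos, sub_lt_self _ hpos⟩

theorem stmt_2 {n k : ℕ} (hk : 1 ≤ k) (P : Matrix (Fin n) (Fin n) ℝ)
    (B : Matrix (Fin k) (Fin n) ℝ) (hP : P.PosDef) (hPsym : P.IsSymm) (hB : B.rank = k) :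
    ((1 - (P * Bᵀ * (B * P * Bᵀ)⁻¹) * B) * P * (1 - (P * Bᵀ * (B * P * Bᵀ)⁻¹) * B)ᵀ).trace
      = P.trace - ((P * Bᵀ * (B * P * Bᵀ)⁻¹) * B * P).trace ∧
    0 < ((P * Bᵀ * (B * P * Bᵀ)⁻¹) * B * P).trace ∧
    ((1 - (P * Bᵀ * (B * P * Bᵀ)⁻¹) * B) * P * (1 - (P * Bᵀ * (B * P * Bᵀ)⁻¹) * B)ᵀ).trace
      < P.trace :=
  stmt_2_general hk P B hP hB
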